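/- arXiv:1511.08054 — 2 statements merged into one kernel-verified Lean document; each statement's English description precedes it below -/
import Mathlib

section
/- Let H be a graph with an edge e = uv and let G be obtained from H by adding a new vertex w adjacent exactly to u and v (keeping edge uv). If f_∞(H) ≥ 2, then f_∞(G) = f_∞(H). -/
/-- `d` is a distance function on the graph `G`. -/
def IsDistFn {V : Type*} (G : SimpleGraph V) (d : V → V → ℝ) : Prop :=
  (∀ x y, d x y = d y x) ∧ (∀ x y, G.Adj x y → 0 ≤ d x y) ∧
  (∀ x y, G.Adj x y → ∀ p : G.Walk x y,
    d x y ≤ (p.darts.map fun e => d e.toProd.1 e.toProd.2).sum)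

/-- `f_∞(G)`: the least `k` such that every distance function on `G` admits a
realization in `ℓ_∞^k`. -/
noncomputable def finfty {V : Type*} [Fintype V] (G : SimpleGraph V) : ℕ :=
  sInf {k : ℕ | ∀ d : V → V → ℝ, IsDistFn G d →
    ∃ q : V → Fin k → ℝ, ∀ x y, G.Adj x y → ‖q x - q y‖ = d x y}


/-!
A distance function on `H` extends to `G` by putting `w` on top of `u` (the edge `wu` gets
length `0`), so every realization for `G` restricts to one for `H`. Conversely, realize the
restriction of a distance function on `G` to `H`; the point for `w` must lie at prescribed
distances `a`, `b` from the points `p`, `q` of `u`, `v`, where `a`, `b`, `D = ‖p - q‖` satisfy the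
triangle inequalities. In `ℓ_∞^k` with `k ≥ 2` the sphere of radius `a` about `p` is connected,
and on it the distance to `q` takes the values `|a - D|` and `a + D`, hence also `b`.
-/

open Metric
open SimpleGraph (Walk)

lemma exists_dist_eq_and_dist_eq {E : Type*} [NormedAddCommGroup E] [NormedSpace ℝ E]
    (hE : 1 < Module.rank ℝ E) (p₁ p₂ : E) {a b : ℝ} (ha : 0 ≤ a)
    (hb : |a - dist p₁ p₂| ≤ b) (hb' : b ≤ a + dist p₁ p₂) :
    ∃ z, dist z p₁ = a ∧ dist z p₂ = b := by
  have : Nontrivial E := rank_pos_iff_nontrivial.mp (zero_lt_one.trans hE)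
  obtain ⟨e, he, hpe⟩ : ∃ e : E, ‖e‖ = 1 ∧ p₂ - p₁ = ‖p₂ - p₁‖ • e := by
    by_cases h : p₂ - p₁ = 0
    · obtain ⟨e, he⟩ := exists_norm_eq E zero_le_one
      exact ⟨e, he, by simp [h]⟩
    · exact ⟨‖p₂ - p₁‖⁻¹ • (p₂ - p₁), norm_smul_inv_norm h,
        (smul_inv_smul₀ (norm_ne_zero_iff.mpr h) _).symm⟩
  set D := dist p₁ p₂
  have hD : ‖p₂ - p₁‖ = D := by rw [← dist_eq_norm]; exact dist_comm _ _
  have hp₂ : p₂ = p₁ + D • e := by rw [← hD, ← hpe]; abel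
  have hnear : dist (p₁ + a • e) p₂ = |a - D| := by
    rw [hp₂, dist_eq_norm, add_sub_add_left_eq_sub, ← sub_smul, norm_smul, he, mul_one,
      Real.norm_eq_abs]
  have hfar : dist (p₁ + -a • e) p₂ = a + D := by
    rw [hp₂, dist_eq_norm, add_sub_add_left_eq_sub, ← sub_smul, norm_smul, he, mul_one,
      Real.norm_eq_abs, abs_sub_comm, sub_neg_eq_add,
      abs_of_nonneg (add_nonneg dist_nonneg ha), add_comm]
  have hmem : ∀ c : ℝ, |c| = a → p₁ + c • e ∈ sphere p₁ a := fun c hc => by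
    rw [mem_sphere, dist_eq_norm, add_sub_cancel_left, norm_smul, he, mul_one,
      Real.norm_eq_abs, hc]
  obtain ⟨z, hz, hzb⟩ := (isPreconnected_sphere hE p₁ a).intermediate_value
    (hmem a (abs_of_nonneg ha)) (hmem (-a) (by rw [abs_neg, abs_of_nonneg ha]))
    (f := fun z => dist z p₂) (continuous_id.dist continuous_const).continuousOn
    (show b ∈ Set.Icc _ _ by rw [hnear, hfar]; exact ⟨hb, hb'⟩)
  exact ⟨z, mem_sphere.mp hz, hzb⟩

namespace SimpleGraph.Walk

variable {V : Type*} {G : SimpleGraph V}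

def weight (d : V → V → ℝ) {x y : V} (p : G.Walk x y) : ℝ :=
  (p.darts.map fun e => d e.toProd.1 e.toProd.2).sum

@[simp]
lemma weight_nil (d : V → V → ℝ) (x : V) : (nil : G.Walk x x).weight d = 0 := rfl

@[simp]
lemma weight_cons (d : V → V → ℝ) {x y z : V} (h : G.Adj x y) (p : G.Walk y z) :
    (cons h p).weight d = d x y + p.weight d := by
  simp [weight]

@[simp]
lemma weight_copy (d : V → V → ℝ) {x y x' y' : V} (p : G.Walk x y) (hx : x = x') (hy : y = y') :
    (p.copy hx hy).weight d = p.weight d := by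
  subst hx hy; rfl

lemma weight_nonneg {d : V → V → ℝ} (hd : ∀ x y, G.Adj x y → 0 ≤ d x y) {x y : V}
    (p : G.Walk x y) : 0 ≤ p.weight d := by
  induction p with
  | nil => simp
  | cons h _ ih => simpa using add_nonneg (hd _ _ h) ih

end SimpleGraph.Walk

open Classical in
noncomputable def comapDist {V W : Type*} (φ : V → W) (d : W → W → ℝ) : V → V → ℝ :=
  fun x y => if φ x = φ y then 0 else d (φ x) (φ y)

section Comap

variable {V W : Type*} {G : SimpleGraph V} {H : SimpleGraph W} {φ : V → W}

lemma comapDist_of_ne (d : W → W → ℝ) {x y : V} (h : φ x ≠ φ y) :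
    comapDist φ d x y = d (φ x) (φ y) := if_neg h

lemma SimpleGraph.Walk.exists_weight_eq_weight_comapDist
    (hφ : ∀ x y, G.Adj x y → φ x = φ y ∨ H.Adj (φ x) (φ y)) (d : W → W → ℝ) {x y : V}
    (p : G.Walk x y) : ∃ q : H.Walk (φ x) (φ y), q.weight d = p.weight (comapDist φ d) := by
  induction p with
  | nil => exact ⟨.nil, rfl⟩
  | @cons x y z hxy p ih =>
    obtain ⟨q, hq⟩ := ih
    by_cases hxy' : φ x = φ y
    · refine ⟨q.copy hxy'.symm rfl, ?_⟩
      rw [Walk.weight_copy, Walk.weight_cons, hq, comapDist, if_pos hxy', zero_add]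
    · refine ⟨.cons ((hφ x y hxy).resolve_left hxy') q, ?_⟩
      rw [Walk.weight_cons, Walk.weight_cons, hq, comapDist_of_ne d hxy']

lemma IsDistFn.comap {d : W → W → ℝ} (hd : IsDistFn H d)
    (hφ : ∀ x y, G.Adj x y → φ x = φ y ∨ H.Adj (φ x) (φ y)) :
    IsDistFn G (comapDist φ d) := by
  obtain ⟨hsymm, hnonneg, hwalk⟩ := hd
  refine ⟨fun x y => ?_, fun x y hxy => ?_, fun x y hxy p => ?_⟩
  · by_cases h : φ x = φ y
    · simp [comapDist, h]
    · rw [comapDist_of_ne d h, comapDist_of_ne d (Ne.symm h), hsymm]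
  · by_cases h : φ x = φ y
    · simp [comapDist, h]
    · rw [comapDist_of_ne d h]
      exact hnonneg _ _ ((hφ x y hxy).resolve_left h)
  · obtain ⟨q, hq⟩ := Walk.exists_weight_eq_weight_comapDist hφ d p
    change comapDist φ d x y ≤ p.weight (comapDist φ d)
    rw [← hq]
    by_cases h : φ x = φ y
    · simpa [comapDist, h] using Walk.weight_nonneg hnonneg q
    · rw [comapDist_of_ne d h]
      exact hwalk _ _ ((hφ x y hxy).resolve_left h) q

end Comap

lemma IsDistFn.le_add {V : Type*} {G : SimpleGraph V} {d : V → V → ℝ} (hd : IsDistFn G d)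
    {x y z : V} (hxz : G.Adj x z) (hxy : G.Adj x y) (hyz : G.Adj y z) :
    d x z ≤ d x y + d y z := by
  simpa [Walk.weight] using hd.2.2 x z hxz (.cons hxy (.cons hyz .nil))

def LinftyRealizable {V : Type*} (G : SimpleGraph V) (k : ℕ) : Prop :=
  ∀ d : V → V → ℝ, IsDistFn G d →
    ∃ q : V → Fin k → ℝ, ∀ x y, G.Adj x y → ‖q x - q y‖ = d x y

lemma finfty_eq_sInf {V : Type*} [Fintype V] (G : SimpleGraph V) :
    finfty G = sInf {k | LinftyRealizable G k} := rfl

section GlueTriangle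

variable {V : Type*} {H : SimpleGraph V} {u v : V} {G : SimpleGraph (Option V)}

lemma LinftyRealizable.of_glue_triangle (huv : H.Adj u v)
    (hGs : ∀ x y : V, G.Adj (some x) (some y) ↔ H.Adj x y)
    (hGw : ∀ x : V, G.Adj (some x) none ↔ (x = u ∨ x = v))
    {k : ℕ} (hG : LinftyRealizable G k) : LinftyRealizable H k := by
  intro d hd
  have hφ : ∀ x y, G.Adj x y → x.getD u = y.getD u ∨ H.Adj (x.getD u) (y.getD u) := by
    rintro (_ | x) (_ | y) hxy
    · exact absurd rfl hxy.ne
    · rcases (hGw y).1 hxy.symm with rfl | rfl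
      · exact .inl rfl
      · exact .inr huv
    · rcases (hGw x).1 hxy with rfl | rfl
      · exact .inl rfl
      · exact .inr huv.symm
    · exact .inr ((hGs x y).1 hxy)
  obtain ⟨q, hq⟩ := hG _ (hd.comap hφ)
  refine ⟨q ∘ some, fun x y hxy => ?_⟩
  rw [Function.comp_apply, Function.comp_apply, hq _ _ ((hGs x y).2 hxy)]
  exact comapDist_of_ne d hxy.ne

lemma LinftyRealizable.glue_triangle (huv : H.Adj u v)
    (hGs : ∀ x y : V, G.Adj (some x) (some y) ↔ H.Adj x y)
    (hGw : ∀ x : V, G.Adj (some x) none ↔ (x = u ∨ x = v))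
    {k : ℕ} (hk : 2 ≤ k) (hH : LinftyRealizable H k) : LinftyRealizable G k := by
  intro d hd
  obtain ⟨qH, hqH⟩ := hH _ (hd.comap (φ := some) fun x y h => .inr ((hGs x y).2 h))
  replace hqH : ∀ x y, H.Adj x y → dist (qH x) (qH y) = d (some x) (some y) := fun x y h => by
    rw [dist_eq_norm, hqH x y h, comapDist_of_ne d (Option.some_injective _ |>.ne h.ne)]
  have hu : G.Adj (some u) none := (hGw u).2 (.inl rfl)
  have hv : G.Adj (some v) none := (hGw v).2 (.inr rfl)
  have huv' : G.Adj (some u) (some v) := (hGs u v).2 huv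
  have hsymm := hd.1
  have h₁ := hd.le_add huv' hu hv.symm
  have h₂ := hd.le_add hu huv' hv
  have h₃ := hd.le_add hv huv'.symm hu
  have hdim : 1 < Module.rank ℝ (Fin k → ℝ) := by rw [rank_fin_fun]; exact_mod_cast hk
  obtain ⟨z, hzu, hzv⟩ := exists_dist_eq_and_dist_eq hdim (qH u) (qH v) (hd.2.1 _ _ hu)
    (b := d (some v) none)
    (by rw [hqH u v huv, abs_le]; constructor <;> linarith [hsymm none (some v)])
    (by rw [hqH u v huv]; linarith [hsymm (some v) (some u)])
  have hw : ∀ x, G.Adj (some x) none → ‖qH x - z‖ = d (some x) none := by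
    intro x hx
    rcases (hGw x).1 hx with rfl | rfl
    · rw [← dist_eq_norm, dist_comm, hzu]
    · rw [← dist_eq_norm, dist_comm, hzv]
  refine ⟨fun o => o.elim z qH, ?_⟩
  rintro (_ | x) (_ | y) hxy
  · exact absurd rfl hxy.ne
  · rw [hsymm, ← hw y hxy.symm, norm_sub_rev]; rfl
  · exact hw x hxy
  · rw [← hqH x y ((hGs x y).1 hxy), dist_eq_norm]; rfl

end GlueTriangle

/-- Gluing a triangle onto an edge `uv` of `H` (adding a new vertex `w`
adjacent to exactly `u` and `v`) does not change `f_∞`, provided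
`f_∞(H) ≥ 2`. -/
theorem finfty_glue_triangle
    {V : Type*} [Fintype V] (H : SimpleGraph V) (u v : V) (huv : H.Adj u v)
    (G : SimpleGraph (Option V))
    (hGs : ∀ x y : V, G.Adj (some x) (some y) ↔ H.Adj x y)
    (hGw : ∀ x : V, G.Adj (some x) none ↔ (x = u ∨ x = v))
    (h2 : 2 ≤ finfty H) :
    finfty G = finfty H := by
  simp only [finfty_eq_sInf] at h2 ⊢
  set n := sInf {k | LinftyRealizable H k}
  have hH : LinftyRealizable H n :=
    Nat.sInf_mem (Nat.nonempty_of_pos_sInf (zero_lt_two.trans_le h2))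
  have hG : LinftyRealizable G n := hH.glue_triangle huv hGs hGw h2
  have hG' : LinftyRealizable G (sInf {k | LinftyRealizable G k}) :=
    Nat.sInf_mem (s := {k | LinftyRealizable G k}) ⟨n, hG⟩
  exact le_antisymm (Nat.sInf_le hG) (Nat.sInf_le (hG'.of_glue_triangle huv hGs hGw))
end

section
/- f_∞(W_4) = 3, where W_4 is the wheel on 5 vertices: every distance function on W_4 can be realized in ℓ_∞³ (indeed W_4 has a vertex cover of size 3), but there exists a distance function on W_4 not realizable in ℓ_∞². -/
/-- The wheel `W_4` on 5 vertices: the 4-cycle `0-1-2-3` plus the hub `4`. -/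
def W4 : SimpleGraph (Fin 5) :=
  SimpleGraph.fromEdgeSet
    {s(0, 1), s(1, 2), s(2, 3), s(3, 0), s(0, 4), s(1, 4), s(2, 4), s(3, 4)}

open Function

def IsRealization {V ι : Type*} [Fintype ι] (G : SimpleGraph V) (d : V → V → ℝ)
    (q : V → ι → ℝ) : Prop :=
  ∀ x y, G.Adj x y → ‖q x - q y‖ = d x y

namespace SimpleGraph

variable {V : Type*} {G : SimpleGraph V} {d : V → V → ℝ} {x y z : V}

namespace Walk

def weightedLength (p : G.Walk x y) (d : V → V → ℝ) : ℝ :=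
  (p.darts.map fun e => d e.toProd.1 e.toProd.2).sum

@[simp]
lemma weightedLength_nil : (nil : G.Walk x x).weightedLength d = 0 := rfl

@[simp]
lemma weightedLength_cons (h : G.Adj x y) (p : G.Walk y z) :
    (cons h p).weightedLength d = d x y + p.weightedLength d := by
  simp [weightedLength]

@[simp]
lemma weightedLength_concat (p : G.Walk x y) (h : G.Adj y z) :
    (p.concat h).weightedLength d = p.weightedLength d + d y z := by
  simp [weightedLength, darts_concat]

lemma weightedLength_nonneg (hd : ∀ x y, G.Adj x y → 0 ≤ d x y) (p : G.Walk x y) :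
    0 ≤ p.weightedLength d := by
  induction p with
  | nil => simp
  | cons h p ih => simpa using add_nonneg (hd _ _ h) ih

lemma le_weightedLength_of_triangle (hself : ∀ x, d x x = 0)
    (htri : ∀ x y z, d x z ≤ d x y + d y z) (p : G.Walk x y) : d x y ≤ p.weightedLength d := by
  induction p with
  | nil => simp [hself]
  | @cons x y z h p ih =>
    rw [weightedLength_cons]
    linarith [htri x y z]

end Walk

noncomputable def weightedDist (G : SimpleGraph V) (d : V → V → ℝ) (x y : V) : ℝ :=
  ⨅ p : G.Walk x y, p.weightedLength d

section weightedDist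

variable (hd : ∀ x y, G.Adj x y → 0 ≤ d x y)
include hd

lemma weightedDist_le (p : G.Walk x y) : G.weightedDist d x y ≤ p.weightedLength d :=
  ciInf_le ⟨0, Set.forall_mem_range.2 (Walk.weightedLength_nonneg hd)⟩ p

lemma weightedDist_self : G.weightedDist d x x = 0 :=
  le_antisymm (by simpa using weightedDist_le hd Walk.nil)
    (Real.iInf_nonneg (Walk.weightedLength_nonneg hd))

lemma weightedDist_le_add_of_adj (h : G.Adj y z) :
    G.weightedDist d x z ≤ G.weightedDist d x y + d y z := by
  rcases isEmpty_or_nonempty (G.Walk x y) with hxy | hxy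
  · have : IsEmpty (G.Walk x z) := ⟨fun p => hxy.elim (p.concat h.symm)⟩
    simp [weightedDist, hd _ _ h]
  · rw [← sub_le_iff_le_add]
    exact le_ciInf fun p => sub_le_iff_le_add.2 (by simpa using weightedDist_le hd (p.concat h))

end weightedDist

end SimpleGraph

open SimpleGraph

section

variable {V : Type*} {G : SimpleGraph V} {d : V → V → ℝ}

lemma isDistFn_of_triangle (hsymm : ∀ x y, d x y = d y x) (hself : ∀ x, d x x = 0)
    (htri : ∀ x y z, d x z ≤ d x y + d y z) : IsDistFn G d :=
  ⟨hsymm, fun x y _ => by linarith [htri x y x, hself x, hsymm x y],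
    fun _ _ _ => Walk.le_weightedLength_of_triangle hself htri⟩

namespace IsDistFn

variable (hd : IsDistFn G d)
include hd

lemma weightedDist_eq_of_adj {x y : V} (h : G.Adj x y) : G.weightedDist d x y = d x y :=
  have : Nonempty (G.Walk x y) := ⟨h.toWalk⟩
  le_antisymm (by simpa using weightedDist_le hd.2.1 h.toWalk) (le_ciInf (hd.2.2 x y h))

lemma abs_weightedDist_sub_le {x y z : V} (h : G.Adj y z) :
    |G.weightedDist d x y - G.weightedDist d x z| ≤ d y z :=
  abs_sub_le_iff.2
    ⟨by linarith [weightedDist_le_add_of_adj hd.2.1 (x := x) h.symm, hd.1 z y],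
      by linarith [weightedDist_le_add_of_adj hd.2.1 (x := x) h]⟩

theorem exists_isRealization_of_cover {ι : Type*} [Fintype ι] (c : ι → V)
    (hc : ∀ x y, G.Adj x y → ∃ i, c i = x ∨ c i = y) :
    ∃ q : V → ι → ℝ, IsRealization G d q := by
  refine ⟨fun x i => G.weightedDist d (c i) x, fun x y h => le_antisymm ?_ ?_⟩
  · exact (pi_norm_le_iff_of_nonneg (hd.2.1 x y h)).2 fun i => hd.abs_weightedDist_sub_le h
  · obtain ⟨i, rfl | rfl⟩ := hc x y h
    · calc d (c i) y
          = |G.weightedDist d (c i) (c i) - G.weightedDist d (c i) y| := by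
            rw [weightedDist_self hd.2.1, hd.weightedDist_eq_of_adj h, zero_sub, abs_neg,
              abs_of_nonneg (hd.2.1 _ _ h)]
        _ ≤ _ := norm_le_pi_norm ((fun j => G.weightedDist d (c j) (c i)) -
            fun j => G.weightedDist d (c j) y) i
    · calc d x (c i)
          = |G.weightedDist d (c i) x - G.weightedDist d (c i) (c i)| := by
            rw [weightedDist_self hd.2.1, hd.weightedDist_eq_of_adj h.symm, sub_zero, hd.1,
              abs_of_nonneg (hd.2.1 _ _ h.symm)]
        _ ≤ _ := norm_le_pi_norm ((fun j => G.weightedDist d (c j) x) -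
            fun j => G.weightedDist d (c j) (c i)) i

end IsDistFn

lemma norm_extend_zero {ι κ : Type*} [Fintype ι] [Fintype κ] {s : ι → κ} (hs : Injective s)
    (f : ι → ℝ) : ‖extend s f 0‖ = ‖f‖ := by
  refine le_antisymm ((pi_norm_le_iff_of_nonneg (norm_nonneg f)).2 fun j => ?_)
    ((pi_norm_le_iff_of_nonneg (norm_nonneg _)).2 fun i => ?_)
  · by_cases hj : ∃ i, s i = j
    · obtain ⟨i, rfl⟩ := hj
      simpa [hs.extend_apply] using norm_le_pi_norm f i
    · simp [extend_apply' _ _ _ hj]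
  · simpa [hs.extend_apply] using norm_le_pi_norm (extend s f 0) (s i)

lemma IsRealization.extend_zero {ι κ : Type*} [Fintype ι] [Fintype κ] {q : V → ι → ℝ}
    (hq : IsRealization G d q) {s : ι → κ} (hs : Injective s) :
    IsRealization G d fun x => extend s (q x) 0 := fun x y h => by
  have hsub := extend_sub s (q x) (q y) 0 0
  rw [sub_zero] at hsub
  rw [← hsub, norm_extend_zero hs, hq x y h]

theorem finfty_eq_succ [Fintype V] {k : ℕ}
    (hup : ∀ d, IsDistFn G d → ∃ q : V → Fin (k + 1) → ℝ, IsRealization G d q)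
    (hd : IsDistFn G d) (hlow : ¬ ∃ q : V → Fin k → ℝ, IsRealization G d q) :
    finfty G = k + 1 := by
  refine (Nat.sInf_upward_closed_eq_succ_iff ?_ k).2 ⟨hup, fun h => hlow (h d hd)⟩
  intro m n hmn hm d' hd'
  obtain ⟨q, hq⟩ := hm d' hd'
  exact ⟨_, IsRealization.extend_zero hq (Fin.castLE_injective hmn)⟩

end

lemma abs_add_add_abs_sub (a b : ℝ) : |a + b| + |a - b| = 2 * max |a| |b| := by
  rcases le_total |a| |b| with h | h <;> simp only [h, max_eq_left, max_eq_right] <;>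
    cases abs_cases a <;> cases abs_cases b <;> cases abs_cases (a + b) <;>
    cases abs_cases (a - b) <;> linarith

lemma two_mul_norm_fin_two (f : Fin 2 → ℝ) : 2 * ‖f‖ = |f 0 + f 1| + |f 0 - f 1| := by
  simp [Pi.norm_def, Fin.univ_succ, abs_add_add_abs_sub]

def rimLengths : Fin 4 → ℝ := ![18, 17, 20, 24]

-- For `s`, `t` of equal sign the step is `|s - t| = c`, otherwise `max |s| |t| = c`. Without a
-- sign change `±18 ± 17 ± 20 ± 24 = 0` would follow, which parity forbids; `grind` rules out the
-- cases with sign changes.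
lemma false_of_tent_cycle (u : Fin 4 → ℝ)
    (h : ∀ i, |u i - u (i + 1)| + |(|u i| - |u (i + 1)|)| = 2 * rimLengths i) : False := by
  have h0 : |u 0 - u 1| + |(|u 0| - |u 1|)| = 2 * 18 := h 0
  have h1 : |u 1 - u 2| + |(|u 1| - |u 2|)| = 2 * 17 := h 1
  have h2 : |u 2 - u 3| + |(|u 2| - |u 3|)| = 2 * 20 := h 2
  have h3 : |u 3 - u 0| + |(|u 3| - |u 0|)| = 2 * 24 := h 3
  clear h
  grind

lemma false_of_diamond_cycle_of_le (u v : Fin 4 → ℝ) (hn : ∀ i, |u i| + |v i| = 400)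
    (he : ∀ i, |u i - u (i + 1)| + |v i - v (i + 1)| = 2 * rimLengths i) (hv : 200 ≤ v 0) :
    False := by
  have hstep : ∀ i, |v i - v (i + 1)| ≤ 2 * rimLengths i := fun i => by
    linarith [he i, abs_nonneg (u i - u (i + 1))]
  have hpos : ∀ i, 0 ≤ v i := by
    have h01 : |v 0 - v 1| ≤ 2 * 18 := hstep 0
    have h12 : |v 1 - v 2| ≤ 2 * 17 := hstep 1
    have h30 : |v 3 - v 0| ≤ 2 * 24 := hstep 3
    rw [abs_le] at h01 h12 h30
    intro i
    fin_cases i <;> simp only [Fin.zero_eta, Fin.mk_one, Fin.reduceFinMk, Fin.isValue] <;> linarith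
  have hv_eq : ∀ i, v i = 400 - |u i| := fun i => by linarith [hn i, abs_of_nonneg (hpos i)]
  refine false_of_tent_cycle u fun i => ?_
  rw [← he i, hv_eq, hv_eq, abs_sub_comm (|u i|)]
  ring_nf

lemma false_of_diamond_cycle (u v : Fin 4 → ℝ) (hn : ∀ i, |u i| + |v i| = 400)
    (he : ∀ i, |u i - u (i + 1)| + |v i - v (i + 1)| = 2 * rimLengths i) (hv : 200 ≤ |v 0|) :
    False := by
  rcases le_abs'.1 hv with h | h
  · exact false_of_diamond_cycle_of_le u (-v) (by simpa using hn)
      (fun i => by simpa [neg_add_eq_sub, abs_sub_comm] using he i)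
      (by rw [Pi.neg_apply]; linarith)
  · exact false_of_diamond_cycle_of_le u v hn he h

lemma false_of_sphere_cycle_fin_two (r : Fin 4 → Fin 2 → ℝ) (hr : ∀ i, ‖r i‖ = 200)
    (hc : ∀ i, ‖r i - r (i + 1)‖ = rimLengths i) : False := by
  set u := fun i => r i 0 + r i 1
  set v := fun i => r i 0 - r i 1
  have hn : ∀ i, |u i| + |v i| = 400 := fun i => by
    rw [← two_mul_norm_fin_two, hr]; norm_num
  have he : ∀ i, |u i - u (i + 1)| + |v i - v (i + 1)| = 2 * rimLengths i := fun i => by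
    rw [← hc, two_mul_norm_fin_two]
    simp only [u, v, Pi.sub_apply]
    ring_nf
  rcases le_total |u 0| |v 0| with h | h
  · exact false_of_diamond_cycle u v hn he (by linarith [hn 0])
  · exact false_of_diamond_cycle v u (fun i => by linarith [hn i]) (fun i => by linarith [he i])
      (by linarith [hn 0])

-- The witness of the paper, with the rim detours `35 = 18 + 17` and `37 = 17 + 20` on the two
-- diagonals so that it is a metric on all of `Fin 5`.
def wheelMetric : Fin 5 → Fin 5 → ℕ :=
  ![![0, 18, 35, 24, 200], ![18, 0, 17, 37, 200], ![35, 17, 0, 20, 200],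
    ![24, 37, 20, 0, 200], ![200, 200, 200, 200, 0]]

lemma isDistFn_wheelMetric : IsDistFn W4 fun x y => (wheelMetric x y : ℝ) := by
  have hsymm : ∀ x y, wheelMetric x y = wheelMetric y x := by decide
  have hself : ∀ x, wheelMetric x x = 0 := by decide
  have htri : ∀ x y z, wheelMetric x z ≤ wheelMetric x y + wheelMetric y z := by decide
  exact isDistFn_of_triangle (fun x y => by rw [hsymm]) (fun x => by simp [hself])
    fun x y z => by exact_mod_cast htri x y z

lemma W4_adj_cover (x y : Fin 5) (h : W4.Adj x y) : ∃ i, ![0, 2, 4] i = x ∨ ![0, 2, 4] i = y := by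
  fin_cases x <;> fin_cases y <;> first | decide | simp [W4] at h

lemma W4_adj_rim (i : Fin 4) : W4.Adj i.castSucc (i + 1).castSucc := by
  fin_cases i <;> simp [W4]

lemma W4_adj_hub (i : Fin 4) : W4.Adj i.castSucc 4 := by
  fin_cases i <;> simp [W4]

lemma not_isRealization_wheelMetric (q : Fin 5 → Fin 2 → ℝ) :
    ¬ IsRealization W4 (fun x y => (wheelMetric x y : ℝ)) q := fun hq => by
  refine false_of_sphere_cycle_fin_two (fun i => q i.castSucc - q 4) (fun i => ?_) (fun i => ?_)
  · rw [hq _ _ (W4_adj_hub i)]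
    fin_cases i <;> simp [wheelMetric]
  · rw [sub_sub_sub_cancel_right, hq _ _ (W4_adj_rim i)]
    fin_cases i <;> simp [wheelMetric, rimLengths]

/-- `f_∞(W_4) = 3`: every distance function on `W_4` is realizable in
`ℓ_∞³`, but some distance function is not realizable in `ℓ_∞²`. -/
theorem finfty_W4 :
    finfty W4 = 3 ∧
    (∀ d : Fin 5 → Fin 5 → ℝ, IsDistFn W4 d →
      ∃ q : Fin 5 → Fin 3 → ℝ, ∀ i j, W4.Adj i j → ‖q i - q j‖ = d i j) ∧
    ¬ (∀ d : Fin 5 → Fin 5 → ℝ, IsDistFn W4 d →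
      ∃ q : Fin 5 → Fin 2 → ℝ, ∀ i j, W4.Adj i j → ‖q i - q j‖ = d i j) := by
  have upper : ∀ d, IsDistFn W4 d → ∃ q : Fin 5 → Fin 3 → ℝ, IsRealization W4 d q :=
    fun d hd => hd.exists_isRealization_of_cover ![0, 2, 4] W4_adj_cover
  have lower : ¬ ∃ q : Fin 5 → Fin 2 → ℝ, IsRealization W4 (fun x y => (wheelMetric x y : ℝ)) q :=
    fun ⟨q, hq⟩ => not_isRealization_wheelMetric q hq
  exact ⟨finfty_eq_succ upper isDistFn_wheelMetric lower, upper,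
    fun h => lower (h _ isDistFn_wheelMetric)⟩
end
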